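/- (Proposition 5.1(ii), second part) Suppose Ψ satisfies condition (⋆) and (ν,r) ⪯_Ψ (μ,s) in Λ = E × ℤ. Then the ⪯-interval and the ⪯_Ψ-interval from (ν,r) to (μ,s) coincide: {(η,t) ∈ Λ : (ν,r) ⪯ (η,t) ⪯ (μ,s)} = {(η,t) ∈ Λ : (ν,r) ⪯_Ψ (η,t) ⪯_Ψ (μ,s)}. -/

import Mathlib

open Finset

/-- Condition (⋆) for a subset `Ψ` of the finite set of weights `W`. -/
def StarCond {E : Type*} [AddCommGroup E] (W Ψ : Finset E) : Prop :=
  ∀ m r : E → ℕ,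
    (∑ α ∈ Ψ, m α • α) = (∑ β ∈ W, r β • β) →
      ((∑ α ∈ Ψ, m α) ≤ (∑ β ∈ W, r β) ∧
        ((∑ α ∈ Ψ, m α) = (∑ β ∈ W, r β) → ∀ β ∈ W, 0 < r β → β ∈ Ψ))

/-- `μ ≤_Ψ ν` iff `ν - μ` is a `ℤ≥0`-linear combination of elements of `Ψ`. -/
def lePsi {E : Type*} [AddCommGroup E] (Ψ : Finset E) (μ ν : E) : Prop :=
  ∃ m : E → ℕ, ν - μ = ∑ α ∈ Ψ, m α • α

/-- `d_Ψ(μ,ν)`: the minimum total `∑ m_α` over representations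
`ν - μ = ∑_{α ∈ Ψ} m_α • α` with `m_α ∈ ℤ≥0`. -/
noncomputable def dPsi {E : Type*} [AddCommGroup E] (Ψ : Finset E) (μ ν : E) : ℕ :=
  sInf {n : ℕ | ∃ m : E → ℕ, (ν - μ = ∑ α ∈ Ψ, m α • α) ∧ n = ∑ α ∈ Ψ, m α}

/-- The partial order `⪯` on `Λ = E × ℤ`: `(λ,r) ⪯ (μ,s)` iff `(λ,r) = (μ,s)`,
or `s > r` and `μ - λ` is a sum of `s - r` elements of `W` (with repetition). -/
def preceq {E : Type*} [AddCommGroup E] (W : Finset E) (x y : E × ℤ) : Prop :=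
  x = y ∨ (x.2 < y.2 ∧
    ∃ ξ : Fin (y.2 - x.2).toNat → E, (∀ i, ξ i ∈ W) ∧ y.1 - x.1 = ∑ i, ξ i)

/-- The refined order `⪯_Ψ` on `Λ = E × ℤ`: `(λ,r) ⪯_Ψ (μ,s)` iff `λ ≤_Ψ μ`
and `d_Ψ(λ,μ) = s - r`. -/
noncomputable def preceqPsi {E : Type*} [AddCommGroup E] (Ψ : Finset E)
    (x y : E × ℤ) : Prop :=
  lePsi Ψ x.1 y.1 ∧ (dPsi Ψ x.1 y.1 : ℤ) = y.2 - x.2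

/-!
Every `⪯_Ψ`-step is a `⪯`-step, since `Ψ ⊆ W`. Conversely, if `(ν,r) ⪯ (η,t) ⪯ (μ,s)`, concatenating
the two families of weights writes `μ - ν` as a sum of `s - r = d_Ψ(ν,μ)` elements of `W`;
condition (⋆) forces all of them into `Ψ`. Hence `d_Ψ(ν,η) ≤ t - r` and `d_Ψ(η,μ) ≤ s - t`,
and the triangle inequality for `d_Ψ` turns both into equalities.
-/

section

variable {E : Type*} [AddCommGroup E]

lemma exists_fin_sum_eq_sum_nsmul (S : Finset E) (m : E → ℕ) {n : ℕ}
    (hn : ∑ α ∈ S, m α = n) :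
    ∃ ξ : Fin n → E, (∀ i, ξ i ∈ S) ∧ ∑ i, ξ i = ∑ α ∈ S, m α • α := by
  subst hn
  set M : Multiset E := ∑ α ∈ S, Multiset.replicate (m α) α
  have hmem : ∀ a ∈ M, a ∈ S := by
    intro a ha
    obtain ⟨α, hα, ha⟩ := Multiset.mem_sum.mp ha
    rwa [Multiset.eq_of_mem_replicate ha]
  have hlen : M.toList.length = ∑ α ∈ S, m α := by simp [M]
  refine ⟨fun i => M.toList[i.1], fun i => hmem _ (Multiset.mem_toList.mp (List.getElem_mem _)), ?_⟩
  calc ∑ i : Fin (∑ α ∈ S, m α), M.toList[i.1]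
      = ∑ i : Fin M.toList.length, M.toList[i.1] := Fin.sum_congr' _ hlen.symm
    _ = M.sum := by rw [Fin.sum_univ_getElem, Multiset.sum_toList]
    _ = ∑ α ∈ S, m α • α := by simp [M, Multiset.sum_sum]

lemma exists_sum_nsmul_eq_fin_sum (S : Finset E) {n : ℕ} (ξ : Fin n → E) (hξ : ∀ i, ξ i ∈ S) :
    ∃ r : E → ℕ, ∑ β ∈ S, r β • β = ∑ i, ξ i ∧ ∑ β ∈ S, r β = n ∧ ∀ i, 0 < r (ξ i) := by
  classical
  refine ⟨fun β => #{i | ξ i = β}, ?_, ?_, fun i => card_pos.mpr ⟨i, by simp⟩⟩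
  · rw [← sum_fiberwise_of_maps_to (fun i _ => hξ i) ξ]
    refine sum_congr rfl fun β _ => ?_
    rw [← sum_const]
    exact sum_congr rfl fun i hi => ((mem_filter.mp hi).2).symm
  · simpa using (card_eq_sum_card_fiberwise (fun i (_ : i ∈ univ) => hξ i)).symm

section dPsi

variable (Ψ : Finset E)

lemma dPsi_le {μ ν : E} (m : E → ℕ) (h : ν - μ = ∑ α ∈ Ψ, m α • α) :
    dPsi Ψ μ ν ≤ ∑ α ∈ Ψ, m α :=
  Nat.sInf_le ⟨m, h, rfl⟩

lemma exists_sum_eq_dPsi {μ ν : E} (h : lePsi Ψ μ ν) :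
    ∃ m : E → ℕ, ν - μ = ∑ α ∈ Ψ, m α • α ∧ dPsi Ψ μ ν = ∑ α ∈ Ψ, m α := by
  obtain ⟨m, hm⟩ := h
  exact Nat.sInf_mem (s := {n | ∃ m : E → ℕ, ν - μ = ∑ α ∈ Ψ, m α • α ∧ n = ∑ α ∈ Ψ, m α})
    ⟨_, m, hm, rfl⟩

lemma dPsi_le_add {μ ν η : E} (h₁ : lePsi Ψ μ ν) (h₂ : lePsi Ψ ν η) :
    dPsi Ψ μ η ≤ dPsi Ψ μ ν + dPsi Ψ ν η := by
  obtain ⟨m₁, hm₁, hd₁⟩ := exists_sum_eq_dPsi Ψ h₁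
  obtain ⟨m₂, hm₂, hd₂⟩ := exists_sum_eq_dPsi Ψ h₂
  have hsum : η - μ = ∑ α ∈ Ψ, (m₁ + m₂) α • α := by
    simp only [Pi.add_apply, add_smul, sum_add_distrib, ← hm₁, ← hm₂]
    abel
  calc dPsi Ψ μ η ≤ ∑ α ∈ Ψ, (m₁ + m₂) α := dPsi_le Ψ _ hsum
    _ = dPsi Ψ μ ν + dPsi Ψ ν η := by rw [hd₁, hd₂, ← sum_add_distrib]; rfl

lemma lePsi_and_dPsi_le_of_fin_sum {μ ν : E} {n : ℕ} (ξ : Fin n → E) (hξ : ∀ i, ξ i ∈ Ψ)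
    (hsum : ν - μ = ∑ i, ξ i) : lePsi Ψ μ ν ∧ dPsi Ψ μ ν ≤ n := by
  obtain ⟨m, hm, hmn, -⟩ := exists_sum_nsmul_eq_fin_sum Ψ ξ hξ
  rw [← hm] at hsum
  exact ⟨⟨m, hsum⟩, hmn ▸ dPsi_le Ψ m hsum⟩

end dPsi

lemma StarCond.mem_of_fin_sum {W Ψ : Finset E} (hstar : StarCond W Ψ) {μ ν : E}
    (hle : lePsi Ψ μ ν) {n : ℕ} (ξ : Fin n → E) (hξ : ∀ i, ξ i ∈ W)
    (hsum : ν - μ = ∑ i, ξ i) (hn : n ≤ dPsi Ψ μ ν) (i : Fin n) : ξ i ∈ Ψ := by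
  obtain ⟨m, hm, hdm⟩ := exists_sum_eq_dPsi Ψ hle
  obtain ⟨r, hr, hrn, hrpos⟩ := exists_sum_nsmul_eq_fin_sum W ξ hξ
  obtain ⟨hmr, hmem⟩ := hstar m r (by rw [← hm, hr, hsum])
  exact hmem (by omega) _ (hξ i) (hrpos i)

lemma preceq_iff (W : Finset E) (x y : E × ℤ) :
    preceq W x y ↔ x.2 ≤ y.2 ∧
      ∃ ξ : Fin (y.2 - x.2).toNat → E, (∀ i, ξ i ∈ W) ∧ y.1 - x.1 = ∑ i, ξ i := by
  constructor
  · rintro (rfl | ⟨hlt, hξ⟩)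
    · refine ⟨le_rfl, ?_⟩
      rw [sub_self, sub_self, Int.toNat_zero]
      exact ⟨Fin.elim0, nofun, by simp⟩
    · exact ⟨hlt.le, hξ⟩
  · rintro ⟨hle, ξ, hξ, hsum⟩
    rcases hle.lt_or_eq with hlt | hxy₂
    · exact Or.inr ⟨hlt, ξ, hξ, hsum⟩
    · have : IsEmpty (Fin (y.2 - x.2).toNat) := by
        rw [hxy₂, sub_self, Int.toNat_zero]
        infer_instance
      rw [univ_eq_empty, sum_empty, sub_eq_zero] at hsum
      exact Or.inl (Prod.ext hsum.symm hxy₂)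

lemma preceq_of_preceqPsi {W Ψ : Finset E} (hΨW : Ψ ⊆ W) {x y : E × ℤ}
    (h : preceqPsi Ψ x y) : preceq W x y := by
  obtain ⟨hle, hd⟩ := h
  obtain ⟨m, hm, hdm⟩ := exists_sum_eq_dPsi Ψ hle
  obtain ⟨ξ, hξ, hsum⟩ := exists_fin_sum_eq_sum_nsmul Ψ m (n := (y.2 - x.2).toNat) (by omega)
  exact (preceq_iff W x y).mpr ⟨by omega, ξ, fun i => hΨW (hξ i), hsum ▸ hm⟩

lemma preceqPsi_of_preceq_of_preceq {W Ψ : Finset E} (hstar : StarCond W Ψ) {x y z : E × ℤ}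
    (hxy : preceqPsi Ψ x y) (hxz : preceq W x z) (hzy : preceq W z y) :
    preceqPsi Ψ x z ∧ preceqPsi Ψ z y := by
  obtain ⟨hxz₂, ξ₁, hξ₁, hsum₁⟩ := (preceq_iff W x z).mp hxz
  obtain ⟨hzy₂, ξ₂, hξ₂, hsum₂⟩ := (preceq_iff W z y).mp hzy
  have hsum : y.1 - x.1 = ∑ i, Fin.append ξ₁ ξ₂ i := by
    simp only [Fin.sum_univ_add, Fin.append_left, Fin.append_right, ← hsum₁, ← hsum₂]
    abel
  have hξ : ∀ i, Fin.append ξ₁ ξ₂ i ∈ W :=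
    Fin.addCases (by simpa using hξ₁) (by simpa using hξ₂)
  have hΨ := hstar.mem_of_fin_sum hxy.1 _ hξ hsum (by have := hxy.2; omega)
  obtain ⟨hle₁, hd₁⟩ := lePsi_and_dPsi_le_of_fin_sum Ψ ξ₁
    (fun i => by simpa using hΨ (Fin.castAdd _ i)) hsum₁
  obtain ⟨hle₂, hd₂⟩ := lePsi_and_dPsi_le_of_fin_sum Ψ ξ₂
    (fun i => by simpa using hΨ (Fin.natAdd _ i)) hsum₂
  have htri := dPsi_le_add Ψ hle₁ hle₂
  have hd := hxy.2
  exact ⟨⟨hle₁, by omega⟩, ⟨hle₂, by omega⟩⟩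

end

theorem preceq_interval_eq_preceqPsi_interval_general
    (E : Type*) [AddCommGroup E]
    (W Ψ : Finset E) (hΨW : Ψ ⊆ W)
    (hstar : StarCond W Ψ)
    (x y : E × ℤ) (hxy : preceqPsi Ψ x y) :
    {z : E × ℤ | preceq W x z ∧ preceq W z y} =
      {z : E × ℤ | preceqPsi Ψ x z ∧ preceqPsi Ψ z y} := by
  ext z
  exact ⟨fun ⟨hxz, hzy⟩ => preceqPsi_of_preceq_of_preceq hstar hxy hxz hzy,
    fun ⟨hxz, hzy⟩ => ⟨preceq_of_preceqPsi hΨW hxz, preceq_of_preceqPsi hΨW hzy⟩⟩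

theorem preceq_interval_eq_preceqPsi_interval
    (E : Type*) [AddCommGroup E] [Module ℂ E] [FiniteDimensional ℂ E]
    (W Ψ : Finset E) (hΨW : Ψ ⊆ W) (hne : Ψ.Nonempty)
    (hstar : StarCond W Ψ)
    (x y : E × ℤ) (hxy : preceqPsi Ψ x y) :
    {z : E × ℤ | preceq W x z ∧ preceq W z y} =
      {z : E × ℤ | preceqPsi Ψ x z ∧ preceqPsi Ψ z y} :=
  preceq_interval_eq_preceqPsi_interval_general E W Ψ hΨW hstar x y hxy
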